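/- arXiv:1704.00233 — 2 statements merged into one kernel-verified Lean document; each statement's English description precedes it below -/
import Mathlib

section
/- An exact complex Y• of R-modules is pure acyclic if and only if for every finitely presented module C and every integer n, every chain map from C[-n] (C concentrated in degree n) to Y• is null-homotopic. -/
open CategoryTheory Limits

/-- A cochain complex of modules is exact. -/
def CxExact (R : Type) [CommRing R] (C : CochainComplex (ModuleCat R) ℤ) : Prop :=
  ∀ n : ℤ, LinearMap.range (C.d (n - 1) n).hom = LinearMap.ker (C.d n (n + 1)).hom

/-- A cochain complex of modules is pure acyclic: it is exact and each cycle
short exact sequence `0 → Z^n → C^n → Z^{n+1} → 0` is pure exact, i.e. the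
inclusion `Z^n → C^n` stays injective after tensoring with any module. -/
def PureAcyclic (R : Type) [CommRing R] (C : CochainComplex (ModuleCat R) ℤ) : Prop :=
  CxExact R C ∧
    ∀ (n : ℤ) (X : Type) [AddCommGroup X] [Module R X],
      Function.Injective (LinearMap.lTensor X (LinearMap.ker (C.d n (n + 1)).hom).subtype)

/-! Both sides say that the cycle inclusions `Z^n ⊆ Y^n` are pure, in two different guises, and
each guise is equivalent to Cohn's equational purity: every finite linear system with constants in
`Z^n` that is solvable in `Y^n` is solvable in `Z^n`. For tensor purity, the system `a y = z` is
solvable in a module `M` exactly when `∑ eᵢ ⊗ zᵢ` vanishes in `D ⊗ M`, where `D` is the cokernel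
of the transposed system; this is the equational criterion for vanishing. For the lifting
property, a finite presentation of `C` turns the obstruction to lifting `C → Z^{n+1}` through
`Y^n` into such a system, and conversely every system is the lifting problem for the cokernel of
its matrix. Finally, a chain map `C[-n] → Y` is a map `C → Z^n`, and a null-homotopy of it is
exactly a lift through `Y^{n-1} → Z^n`.
-/

open TensorProduct LinearMap Function Submodule

universe u v

theorem LinearMap.apply_eq_sum_smul_single {R M ι : Type*} [CommRing R] [AddCommGroup M]
    [Module R M] [Fintype ι] [DecidableEq ι] (L : (ι → R) →ₗ[R] M) (x : ι → R) :
    L x = ∑ j, x j • L (Pi.single j 1) := by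
  conv_lhs => rw [← Finset.univ_sum_single x]
  refine (map_sum _ _ _).trans (Finset.sum_congr rfl fun j _ => ?_)
  rw [← map_smul, ← Pi.single_smul', smul_eq_mul, mul_one]

theorem Module.Projective.exists_comp_eq_of_range_le {R P M N : Type*} [CommRing R]
    [AddCommGroup P] [Module R P] [Module.Projective R P] [AddCommGroup M] [Module R M]
    [AddCommGroup N] [Module R N] (f : M →ₗ[R] N) (g : P →ₗ[R] N) (hg : range g ≤ range f) :
    ∃ h : P →ₗ[R] M, f ∘ₗ h = g := by
  obtain ⟨h, hh⟩ := Module.projective_lifting_property f.rangeRestrict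
    (g.codRestrict _ fun x => hg ⟨x, rfl⟩) f.surjective_rangeRestrict
  exact ⟨h, LinearMap.ext fun x => congr_arg Subtype.val (LinearMap.congr_fun hh x)⟩

theorem TensorProduct.sum_mkQ_single_tmul_eq_zero_iff {R M ι κ : Type*} [CommRing R]
    [AddCommGroup M] [Module R M] [Fintype ι] [DecidableEq ι] [Fintype κ]
    (a : ι → κ → R) (z : ι → M) :
    ∑ i, (span R (Set.range fun j i => a i j)).mkQ (Pi.single i 1) ⊗ₜ[R] z i = 0 ↔
      ∃ y : κ → M, ∀ i, z i = ∑ j, a i j • y j := by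
  set S := span R (Set.range fun j i => a i j)
  have hmkQ (r : ι → R) : ∑ i, r i • S.mkQ (Pi.single i 1) = S.mkQ r :=
    (S.mkQ.apply_eq_sum_smul_single r).symm
  constructor
  · intro h
    have hspan : span R (Set.range fun i => S.mkQ (Pi.single i 1)) = ⊤ := by
      rw [eq_top_iff, ← range_mkQ S, LinearMap.range_eq_map, ← span_univ, Submodule.map_span,
        span_le]
      rintro _ ⟨r, -, rfl⟩
      rw [← hmkQ]
      exact sum_mem fun i _ => smul_mem _ _ (subset_span ⟨i, rfl⟩)
    obtain ⟨k, b, w, hzw, hb⟩ := vanishesTrivially_of_sum_tmul_eq_zero R hspan h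
    have hcol (c : Fin k) : ∃ u : κ → R, ∀ i, b i c = ∑ j, a i j * u j := by
      have hc : (fun i => b i c) ∈ S := by
        rw [← Submodule.Quotient.mk_eq_zero, ← mkQ_apply, ← hmkQ]
        exact hb c
      obtain ⟨u, hu⟩ := (mem_span_range_iff_exists_fun R).mp hc
      exact ⟨u, fun i => by simpa [Finset.sum_apply, mul_comm] using (congr_fun hu i).symm⟩
    choose u hu using hcol
    refine ⟨fun j => ∑ c, u c j • w c, fun i => ?_⟩
    simp only [hzw, hu, Finset.sum_smul, Finset.smul_sum, smul_smul]
    rw [Finset.sum_comm]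
  · rintro ⟨y, hy⟩
    refine sum_tmul_eq_zero_of_vanishesTrivially R (.of_fintype a y hy fun j => ?_)
    rw [hmkQ, mkQ_apply, Submodule.Quotient.mk_eq_zero]
    exact subset_span ⟨j, rfl⟩

theorem LinearMap.lTensor_injective_of_forall_fg {R M N X : Type*} [CommRing R]
    [AddCommGroup M] [Module R M] [AddCommGroup N] [Module R N] [AddCommGroup X] [Module R X]
    (f : M →ₗ[R] N) (hf : ∀ Q : Submodule R X, Q.FG → Injective (f.lTensor Q)) :
    Injective (f.lTensor X) := by
  rw [injective_iff_map_eq_zero]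
  intro t ht
  obtain ⟨P, hP, tP, rfl⟩ := TensorProduct.exists_of_fg t
  have hPA : rTensor N P.subtype (lTensor P f tP) = 0 := by
    rwa [← LinearMap.comp_apply, rTensor_comp_lTensor, ← lTensor_comp_rTensor]
  obtain ⟨Q, hPQ, hQ, hQA⟩ := TensorProduct.eq_zero_of_fg_of_subtype_eq_zero hP hPA
  have htQ : rTensor M (inclusion hPQ) tP = 0 := by
    refine hf Q hQ ?_
    rwa [map_zero, ← LinearMap.comp_apply, lTensor_comp_rTensor, ← rTensor_comp_lTensor]
  rw [← Submodule.subtype_comp_inclusion P Q hPQ, rTensor_comp, LinearMap.comp_apply, htQ,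
    map_zero]

namespace Submodule

variable {R : Type u} {A : Type v} [CommRing R] [AddCommGroup A] [Module R A]

/-- Purity in the sense of Cohn. -/
def IsPure (K : Submodule R A) : Prop :=
  ∀ {ι κ : Type} [Fintype ι] [Fintype κ] (a : ι → κ → R) (z : ι → K) (y : κ → A),
    (∀ i, (z i : A) = ∑ j, a i j • y j) → ∃ w : κ → K, ∀ i, z i = ∑ j, a i j • w j

variable {K : Submodule R A}

theorem IsPure.lTensor_injective_of_finite (hK : K.IsPure) (Q : Type*) [AddCommGroup Q]
    [Module R Q] [Module.Finite R Q] : Injective (K.subtype.lTensor Q) := by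
  rw [injective_iff_map_eq_zero]
  intro t ht
  obtain ⟨n, s, hs⟩ := Module.Finite.exists_fin (R := R) (M := Q)
  obtain ⟨k, q, z, rfl⟩ := exists_sum_tmul_eq t
  -- padding with generators makes the family span `Q`, as the equational criterion requires
  set q' : Fin k ⊕ Fin n → Q := Sum.elim q s
  set z' : Fin k ⊕ Fin n → K := Sum.elim z 0
  have hsum (M : Type v) [AddCommGroup M] [Module R M] (g : K →ₗ[R] M) :
      ∑ i, q' i ⊗ₜ[R] g (z' i) = ∑ i, q i ⊗ₜ[R] g (z i) := by
    simp [q', z', Fintype.sum_sum_type]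
  have hspan : span R (Set.range q') = ⊤ :=
    eq_top_iff.mpr (hs ▸ span_mono (Set.range_comp_subset_range Sum.inr q'))
  have hA : ∑ i, q' i ⊗ₜ[R] (z' i : A) = 0 :=
    (hsum A K.subtype).trans (by simpa [map_sum] using ht)
  obtain ⟨_, a, y, hzy, ha⟩ := vanishesTrivially_of_sum_tmul_eq_zero R hspan hA
  obtain ⟨w, hzw⟩ := hK a z' y hzy
  exact (hsum K LinearMap.id).symm.trans
    (sum_tmul_eq_zero_of_vanishesTrivially R (.of_fintype a w hzw ha))

theorem IsPure.lTensor_injective (hK : K.IsPure) (X : Type*) [AddCommGroup X] [Module R X] :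
    Injective (K.subtype.lTensor X) :=
  K.subtype.lTensor_injective_of_forall_fg fun Q hQ =>
    have : Module.Finite R Q := Module.Finite.iff_fg.mpr hQ
    hK.lTensor_injective_of_finite Q

theorem isPure_of_forall_lTensor_injective
    (hK : ∀ (X : Type u) [AddCommGroup X] [Module R X], Injective (K.subtype.lTensor X)) :
    K.IsPure := by
  intro ι κ _ _ a z y hzy
  classical
  set D := (ι → R) ⧸ span R (Set.range fun j i => a i j)
  have hK' : ∑ i, (span R (Set.range fun j i => a i j)).mkQ (Pi.single i 1) ⊗ₜ[R] z i = 0 := by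
    refine hK D ?_
    simpa [map_sum] using (sum_mkQ_single_tmul_eq_zero_iff a fun i => (z i : A)).mpr ⟨y, hzy⟩
  exact (sum_mkQ_single_tmul_eq_zero_iff a z).mp hK'

theorem isPure_iff_forall_lTensor_injective :
    K.IsPure ↔ ∀ (X : Type u) [AddCommGroup X] [Module R X], Injective (K.subtype.lTensor X) :=
  ⟨fun hK X _ _ => hK.lTensor_injective X, isPure_of_forall_lTensor_injective⟩

end Submodule

namespace LinearMap

variable {R : Type u} {A : Type v} {B : Type*} [CommRing R] [AddCommGroup A] [Module R A]
  [AddCommGroup B] [Module R B] (f : A →ₗ[R] B)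

theorem exists_comp_eq_of_isPure_ker (hf : (ker f).IsPure) (C : Type*) [AddCommGroup C]
    [Module R C] [Module.FinitePresentation R C] (g : C →ₗ[R] B) (hg : range g ≤ range f) :
    ∃ h : C →ₗ[R] A, f ∘ₗ h = g := by
  classical
  obtain ⟨n, m, π, ρ, hπ, hρπ⟩ := Module.FinitePresentation.exists_fin' R C
  obtain ⟨ψ, hψ⟩ := Module.Projective.exists_comp_eq_of_range_le f (g ∘ₗ π)
    ((range_comp_le_range π g).trans hg)
  have hψρ (i : Fin m) : ψ (ρ (Pi.single i 1)) ∈ ker f := by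
    rw [mem_ker, ← LinearMap.comp_apply, hψ, LinearMap.comp_apply, hρπ.apply_apply_eq_zero,
      map_zero]
  obtain ⟨w, hw⟩ := hf (fun i j => ρ (Pi.single i 1) j) (fun i => ⟨_, hψρ i⟩)
    (fun j => ψ (Pi.single j 1)) fun i => ψ.apply_eq_sum_smul_single _
  set ω := Fintype.linearCombination R fun j => (w j : A)
  have hker : ker π ≤ ker (ψ - ω) := by
    rw [hρπ.linearMap_ker_eq, range_le_ker_iff]
    refine LinearMap.pi_ext' fun i => LinearMap.ext_ring ?_
    simpa [ω, Fintype.linearCombination_apply, sub_eq_zero] using congr_arg Subtype.val (hw i)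
  refine ⟨(ker π).liftQ (ψ - ω) hker ∘ₗ (π.quotKerEquivOfSurjective hπ).symm.toLinearMap,
    LinearMap.ext fun c => ?_⟩
  obtain ⟨x, rfl⟩ := hπ c
  have hωx : f (ω x) = 0 := by
    simp [ω, Fintype.linearCombination_apply, mem_ker.mp (w _).2]
  simpa [quotKerEquivOfSurjective_symm_apply, hωx] using LinearMap.congr_fun hψ x

theorem isPure_ker_of_forall_exists_comp_eq
    (hf : ∀ (C : Type u) [AddCommGroup C] [Module R C] [Module.FinitePresentation R C]
      (g : C →ₗ[R] B), range g ≤ range f → ∃ h : C →ₗ[R] A, f ∘ₗ h = g) :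
    (ker f).IsPure := by
  intro ι κ _ _ a z y hzy
  classical
  set S := span R (Set.range a)
  have : Module.FinitePresentation R ((κ → R) ⧸ S) :=
    Module.finitePresentation_of_surjective S.mkQ S.mkQ_surjective
      (by rw [ker_mkQ]; exact fg_span (Set.finite_range a))
  set ψ := Fintype.linearCombination R y
  have hψa (i : ι) : ψ (a i) = z i := (hzy i).symm
  have hS : S ≤ ker (f ∘ₗ ψ) := span_le.mpr <| by
    rintro _ ⟨i, rfl⟩
    simp [hψa]
  obtain ⟨h, hh⟩ := hf _ (S.liftQ (f ∘ₗ ψ) hS) <| by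
    rintro _ ⟨c, rfl⟩
    obtain ⟨x, rfl⟩ := S.mkQ_surjective c
    exact ⟨ψ x, rfl⟩
  set ω := ψ - h ∘ₗ S.mkQ
  have hω (x : κ → R) : ω x ∈ ker f := by
    simpa [ω, sub_eq_zero] using (LinearMap.congr_fun hh (S.mkQ x)).symm
  refine ⟨fun j => ⟨ω (Pi.single j 1), hω _⟩, fun i => Subtype.ext ?_⟩
  have ha : S.mkQ (a i) = 0 := (Submodule.Quotient.mk_eq_zero S).mpr (subset_span ⟨i, rfl⟩)
  simpa [ω, hψa, ha] using ω.apply_eq_sum_smul_single (a i)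

theorem isPure_ker_iff_forall_exists_comp_eq : (ker f).IsPure ↔
    ∀ (C : Type u) [AddCommGroup C] [Module R C] [Module.FinitePresentation R C]
      (g : C →ₗ[R] B), range g ≤ range f → ∃ h : C →ₗ[R] A, f ∘ₗ h = g :=
  ⟨fun hf C _ _ _ => f.exists_comp_eq_of_isPure_ker hf C, f.isPure_ker_of_forall_exists_comp_eq⟩

end LinearMap

namespace CochainComplex

open HomologicalComplex

variable {V : Type*} [Category V] [Preadditive V] [HasZeroObject V]

theorem nonempty_homotopy_zero_of_single_iff (Y : CochainComplex V ℤ) {i j : ℤ} (hij : i + 1 = j)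
    {C : V} (f : (single V (ComplexShape.up ℤ) j).obj C ⟶ Y) :
    Nonempty (Homotopy f 0) ↔
      ∃ s : C ⟶ Y.X i, s ≫ Y.d i j = (singleObjXSelf (ComplexShape.up ℤ) j C).inv ≫ f.f j := by
  constructor
  · rintro ⟨H⟩
    refine ⟨(singleObjXSelf (ComplexShape.up ℤ) j C).inv ≫ H.hom j i, ?_⟩
    have := H.comm j
    rw [dNext_eq H.hom (rfl : (ComplexShape.up ℤ).Rel j (j + 1)), prevD_eq H.hom hij,
      single_obj_d] at this
    simp [this]
  · rintro ⟨s, hs⟩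
    refine ⟨{ hom := fun p q => if h : p = j ∧ q = i then
                (singleObjXIsoOfEq (ComplexShape.up ℤ) j C p h.1).hom ≫ s ≫ eqToHom (by rw [h.2])
              else 0
              zero := ?_
              comm := ?_ }⟩
    · rintro p q hqp
      rw [dif_neg]
      rintro ⟨rfl, rfl⟩
      exact hqp hij
    · intro p
      by_cases hp : p = j
      · subst hp
        rw [dNext_eq _ (rfl : (ComplexShape.up ℤ).Rel p (p + 1)), prevD_eq _ hij, single_obj_d]
        simp [hs, singleObjXSelf]
      · exact (isZero_single_obj_X _ _ _ _ hp).eq_of_src _ _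

end CochainComplex

/-- An exact complex `Y•` is pure acyclic if and only if for every finitely
presented module `C` and every integer `n`, every chain map from the stalk
complex `C[-n]` (with `C` concentrated in degree `n`) to `Y•` is null-homotopic. -/
theorem stmt_8 (R : Type) [CommRing R] (Y : CochainComplex (ModuleCat R) ℤ)
    (hexact : CxExact R Y) :
    PureAcyclic R Y ↔
      ∀ (C : Type) (_ : AddCommGroup C) (_ : Module R C),
        Module.FinitePresentation R C →
        ∀ (n : ℤ)
          (f : (HomologicalComplex.single (ModuleCat R) (ComplexShape.up ℤ) n).obj
                (ModuleCat.of R C) ⟶ Y),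
          Nonempty (Homotopy f 0) := by
  constructor
  · rintro ⟨-, hpure⟩ C _ _ _ n f
    rw [Y.nonempty_homotopy_zero_of_single_iff (sub_add_cancel n 1)]
    set φ := (HomologicalComplex.singleObjXSelf (ComplexShape.up ℤ) n (ModuleCat.of R C)).inv ≫
      f.f n
    have hφ : range φ.hom ≤ range (Y.d (n - 1) n).hom := by
      rintro _ ⟨c, rfl⟩
      rw [hexact n, mem_ker, ← LinearMap.comp_apply, ← ModuleCat.hom_comp]
      simp [φ, f.comm]
    have hpure' := hpure (n - 1)
    rw [sub_add_cancel] at hpure'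
    obtain ⟨h, hh⟩ := (Y.d (n - 1) n).hom.isPure_ker_iff_forall_exists_comp_eq.mp
      (Submodule.isPure_iff_forall_lTensor_injective.mpr hpure') C φ.hom hφ
    exact ⟨ModuleCat.ofHom h, ModuleCat.hom_ext hh⟩
  · intro hnull
    refine ⟨hexact, fun n => ?_⟩
    apply Submodule.isPure_iff_forall_lTensor_injective.mp
    apply (LinearMap.isPure_ker_iff_forall_exists_comp_eq _).mpr
    intro C _ _ _ g hg
    have hg0 : ModuleCat.ofHom g ≫ Y.d (n + 1) (n + 1 + 1) = 0 := by
      ext c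
      obtain ⟨x, hx⟩ := hg ⟨c, rfl⟩
      rw [ModuleCat.hom_comp, ModuleCat.hom_ofHom, LinearMap.comp_apply, ← hx,
        ← LinearMap.comp_apply, ← ModuleCat.hom_comp, Y.d_comp_d]
      rfl
    obtain ⟨s, hs⟩ := (Y.nonempty_homotopy_zero_of_single_iff rfl _).mp <|
      hnull C _ _ ‹_› (n + 1) (HomologicalComplex.mkHomFromSingle (ModuleCat.ofHom g)
        fun k hk => by subst hk; exact hg0)
    exact ⟨s.hom, by simpa using congr_arg ModuleCat.Hom.hom hs⟩
end

section
/- Let F• be a pure acyclic complex of R-modules and T• a right bounded complex of finitely generated projective modules (T^n = 0 for n sufficiently large). Then every chain map T• → F• is null-homotopic. -/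
open CategoryTheory Limits

variable {R : Type} [CommRing R] {F T : CochainComplex (ModuleCat R) ℤ}

lemma zero_of_subsingleton {M N : ModuleCat R} [Subsingleton M] (g : M ⟶ N) : g = 0 := by
  ext x
  rw [Subsingleton.elim x 0]
  simp

lemma d_eqToHom (C : CochainComplex (ModuleCat R) ℤ) {i i' : ℤ} (h : i = i') (j : ℤ) :
    C.d i j = eqToHom (congrArg C.X h) ≫ C.d i' j := by
  subst h; simp

open Classical in
noncomputable def homSeq (f : T ⟶ F) (N : ℤ) : ∀ n : ℤ, (T.X (n+1) ⟶ F.X n)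
  | n =>
    if _ : N ≤ n then 0
    else if h : ∃ s : T.X (n+1) ⟶ F.X n,
        s ≫ F.d n (n+1) = f.f (n+1) - T.d (n+1) (n+1+1) ≫ homSeq f N (n+1) then
      h.choose
    else 0
termination_by n => (N - n).toNat
decreasing_by simp_all; assumption

lemma homSeq_spec (hex : CxExact R F) (hproj : ∀ n, Module.Projective R (T.X n))
    (f : T ⟶ F) (N : ℤ) (hT : ∀ n > N, Subsingleton (T.X n)) :
    ∀ n : ℤ, homSeq f N n ≫ F.d n (n+1) =
      f.f (n+1) - T.d (n+1) (n+1+1) ≫ homSeq f N (n+1) := by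
  suffices h : ∀ (k : ℕ) (n : ℤ), (N - n).toNat = k →
      homSeq f N n ≫ F.d n (n+1) = f.f (n+1) - T.d (n+1) (n+1+1) ≫ homSeq f N (n+1) by
    intro n; exact h _ n rfl
  intro k
  induction k using Nat.strong_induction_on with
  | _ k ih =>
    intro n hk
    by_cases hn : N ≤ n
    · -- everything is zero above N
      haveI : Subsingleton (T.X (n+1)) := hT _ (by omega)
      rw [homSeq, dif_pos hn, zero_of_subsingleton (f.f (n+1)),
        zero_of_subsingleton (T.d (n+1) (n+1+1))]
      simp
    · have ihn : homSeq f N (n+1) ≫ F.d (n+1) (n+1+1) =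
          f.f (n+1+1) - T.d (n+1+1) (n+1+1+1) ≫ homSeq f N (n+1+1) :=
        ih ((N - (n+1)).toNat) (by omega) (n+1) rfl
      set g : T.X (n+1) ⟶ F.X (n+1) :=
        f.f (n+1) - T.d (n+1) (n+1+1) ≫ homSeq f N (n+1) with hg
      have hgd : g ≫ F.d (n+1) (n+1+1) = 0 := by
        rw [hg, Preadditive.sub_comp, Category.assoc, ihn, f.comm (n+1) (n+1+1),
          Preadditive.comp_sub]
        simp [← Category.assoc, HomologicalComplex.d_comp_d]
      have hdE : F.d (n+1-1) (n+1) =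
          eqToHom (congrArg F.X (show n+1-1 = n by ring)) ≫ F.d n (n+1) :=
        d_eqToHom F (show n+1-1 = n by ring) _
      -- build the lift via projectivity
      have hmem : ∀ x : T.X (n+1), g x ∈ LinearMap.ker (F.d (n+1) (n+1+1)).hom := by
        intro x
        have := congrArg (fun (φ : T.X (n+1) ⟶ F.X (n+1+1)) => φ x) hgd
        simpa [LinearMap.mem_ker] using this
      set K := LinearMap.ker (F.d (n+1) (n+1+1)).hom
      have hKd : ∀ x : F.X n, F.d n (n+1) x ∈ K := by
        intro x
        show (F.d n (n+1) ≫ F.d (n+1) (n+1+1)) x = 0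
        rw [HomologicalComplex.d_comp_d]
        rfl
      set π : F.X n →ₗ[R] K := (F.d n (n+1)).hom.codRestrict K hKd with hπ
      have hπs : Function.Surjective π := by
        rintro ⟨y, hy⟩
        have hy' : y ∈ LinearMap.ker (F.d (n+1) (n+1+1)).hom := hy
        rw [← hex (n+1)] at hy'
        obtain ⟨x', hx'⟩ := hy'
        rw [hdE] at hx'
        refine ⟨eqToHom (congrArg F.X (show n+1-1 = n by ring)) x', Subtype.ext ?_⟩
        exact hx'
      have g' : T.X (n+1) →ₗ[R] K := g.hom.codRestrict K hmem
      haveI := hproj (n+1)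
      obtain ⟨h, hh⟩ := Module.projective_lifting_property π
        (g.hom.codRestrict K hmem) hπs
      have hex' : ∃ s : T.X (n+1) ⟶ F.X n,
          s ≫ F.d n (n+1) = f.f (n+1) - T.d (n+1) (n+1+1) ≫ homSeq f N (n+1) := by
        refine ⟨ModuleCat.ofHom h, ?_⟩
        rw [← hg]
        ext x
        have := congrArg (fun (φ : T.X (n+1) →ₗ[R] K) => (φ x).1) hh
        simpa [hπ] using this
      rw [homSeq, dif_neg hn, dif_pos hex']
      exact hex'.choose_spec

/-- Every chain map from a right bounded complex of finitely generated projective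
modules to a pure acyclic complex is null-homotopic. -/
theorem stmt_9 (R : Type) [CommRing R]
    (F T : CochainComplex (ModuleCat R) ℤ)
    (hpa : PureAcyclic R F)
    (hfg : ∀ n, Module.Finite R (T.X n))
    (hproj : ∀ n, Module.Projective R (T.X n))
    (hbdd : ∃ N : ℤ, ∀ n > N, Subsingleton (T.X n)) :
    ∀ f : T ⟶ F, Nonempty (Homotopy f 0) := by
  obtain ⟨N, hT⟩ := hbdd
  intro f
  refine ⟨⟨fun i j =>
      if h : j + 1 = i then eqToHom (congrArg T.X h.symm) ≫ homSeq f N j else 0,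
    ?_, ?_⟩⟩
  · intro i j hij
    exact dif_neg hij
  · intro i
    obtain ⟨n, rfl⟩ : ∃ n, i = n + 1 := ⟨i - 1, by omega⟩
    have spec := homSeq_spec hpa.1 hproj f N hT n
    rw [dNext_eq _ (show (ComplexShape.up ℤ).Rel (n+1) (n+1+1) from rfl),
        prevD_eq _ (show (ComplexShape.up ℤ).Rel n (n+1) from rfl)]
    rw [dif_pos rfl, dif_pos rfl]
    simp only [eqToHom_refl, Category.id_comp]
    rw [spec]
    simp
end
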